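/- The skeleton map sk, defined by sk(leaf) = ∅ and sk(∧(t_1,...,t_n)) = B_+^{n-1}(sk(t_1)···sk(t_n)) for n ≥ 2, extends to an algebra morphism from the Hopf algebra of reduced plane trees H_PT to the Connes–Kreimer Hopf algebra H_CK of rooted trees decorated by positive integers, and this morphism is a morphism of coalgebras (hence of Hopf algebras): Δ_CK ∘ sk = (sk ⊗ sk) ∘ Δ_PT. -/

import Mathlib

/-!
Both coproducts follow the same recursion `Δ(t) = 1 ⊗ t + (Λ ⊗ id)(Δ(t₁) ⋯ Δ(tₙ))` (the unit of
`H_PT` being the leaf, which `sk` sends to the empty forest), and `sk` and `sk ⊗ sk` are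
multiplicative, so by induction on trees everything reduces to `sk ∘ Λ = B₊^{n-1} ∘ sk`. Since
`sk` erases leaves, the arity `n` cannot be read off after applying `sk`; it is read off the
left tensor factors instead: each `Δ_PT(tᵢ)` has a single tree on the left, so `Δ(t₁) ⋯ Δ(tₙ)`
is spanned by tensors whose left factor is a word of exactly `n` trees, and on such tensors
`(sk ⊗ sk) ∘ (Λ ⊗ id) = (B₊^{n-1} ⊗ id) ∘ (sk ⊗ sk)`.
-/
noncomputable section

open scoped TensorProduct

/-- Reduced plane trees: every internal vertex has at least two children. -/
inductive STree where
  | leaf : STree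
  | node (a b : STree) (l : List STree) : STree

/-- Rooted trees decorated by positive integers (children listed in some order). -/
inductive DTree where
  | node (d : ℕ+) (ch : List DTree) : DTree

/-- The Hopf algebra of (forests of) reduced plane trees, modeled on words of trees. -/
abbrev HPT := MonoidAlgebra ℚ (FreeMonoid STree)

/-- The (decorated) Connes–Kreimer Hopf algebra, modeled on words of decorated rooted
trees. -/
abbrev HCK := MonoidAlgebra ℚ (FreeMonoid DTree)

mutual
  /-- The skeleton map: `sk(leaf) = ∅` and
  `sk(∧(t_1,…,t_n)) = B₊^{n-1}(sk(t_1) ⋯ sk(t_n))`, as a forest of decorated trees. -/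
  def skT : STree → List DTree
    | .leaf => []
    | .node a b l =>
        [DTree.node ⟨1 + l.length, by omega⟩ (skT a ++ skT b ++ skL l)]
  def skL : List STree → List DTree
    | [] => []
    | t :: ts => skT t ++ skL ts
end

/-- The skeleton map on forests, as a monoid morphism on words. -/
def skM : FreeMonoid STree →* FreeMonoid DTree :=
  FreeMonoid.lift fun t => FreeMonoid.ofList (skT t)

/-- The induced linear map `H_PT → H_CK`. -/
def skLin : HPT →ₗ[ℚ] HCK := MonoidAlgebra.mapDomainLinearMap ℚ ℚ ⇑skM

/-- The grafting operator `B₊^d` on `H_CK`. -/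
def Bplus (d : ℕ+) : HCK →ₗ[ℚ] HCK :=
  MonoidAlgebra.mapDomainLinearMap ℚ ℚ fun w : FreeMonoid DTree =>
    FreeMonoid.ofList [DTree.node d w.toList]

mutual
  /-- The Connes–Kreimer coproduct on decorated trees, defined recursively by
  `Δ(B₊^d(F)) = 1 ⊗ B₊^d(F) + (B₊^d ⊗ Id) Δ(F)`. -/
  def deltaCKt : DTree → HCK ⊗[ℚ] HCK
    | .node d ch =>
        1 ⊗ₜ (MonoidAlgebra.single (FreeMonoid.ofList [DTree.node d ch]) 1) +
          (TensorProduct.map (Bplus d) LinearMap.id) (deltaCKf ch)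
  /-- The (multiplicative) extension of the Connes–Kreimer coproduct to forests. -/
  def deltaCKf : List DTree → HCK ⊗[ℚ] HCK
    | [] => 1
    | t :: ts => deltaCKt t * deltaCKf ts
end

/-- Grafting a word of plane trees under a common root. -/
def mkNode : List STree → STree
  | a :: b :: l => .node a b l
  | [a] => a
  | [] => .leaf

/-- The grafting operator `Λ` on `H_PT`. -/
def graft : HPT →ₗ[ℚ] HPT :=
  MonoidAlgebra.mapDomainLinearMap ℚ ℚ fun w : FreeMonoid STree =>
    FreeMonoid.ofList [mkNode w.toList]

/-- The basis element of `H_PT` corresponding to a single tree. -/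
def onePT (t : STree) : HPT := MonoidAlgebra.single (FreeMonoid.ofList [t]) 1

mutual
  /-- The coproduct of `H_PT` on trees, defined recursively by `Δ(leaf) = leaf ⊗ leaf` and
  `Δ(∧(t_1,…,t_n)) = leaf ⊗ ∧(t_1,…,t_n) + (Λ ⊗ Id) (Δ(t_1) ⋯ Δ(t_n))`. -/
  def deltaPTt : STree → HPT ⊗[ℚ] HPT
    | .leaf => (onePT .leaf) ⊗ₜ (onePT .leaf)
    | .node a b l =>
        (onePT .leaf) ⊗ₜ (onePT (.node a b l)) +
          (TensorProduct.map graft LinearMap.id) (deltaPTt a * deltaPTt b * deltaPTf l)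
  /-- The multiplicative extension of the coproduct of `H_PT` to forests. -/
  def deltaPTf : List STree → HPT ⊗[ℚ] HPT
    | [] => 1
    | t :: ts => deltaPTt t * deltaPTf ts
end

open TensorProduct

def skAlg : HPT →ₐ[ℚ] HCK := MonoidAlgebra.mapDomainAlgHom ℚ ℚ skM

lemma map_skLin_skLin_mul (x y : HPT ⊗[ℚ] HPT) :
    map skLin skLin (x * y) = map skLin skLin x * map skLin skLin y :=
  map_mul (Algebra.TensorProduct.map skAlg skAlg) x y

lemma map_skLin_skLin_one : map skLin skLin (1 : HPT ⊗[ℚ] HPT) = 1 :=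
  map_one (Algebra.TensorProduct.map skAlg skAlg)

lemma skM_eq_ofList_skL (w : FreeMonoid STree) : skM w = FreeMonoid.ofList (skL w.toList) := by
  induction w using FreeMonoid.inductionOn' with
  | one => rfl
  | of_mul t w ih =>
    rw [map_mul, ih, FreeMonoid.toList_of_mul, skL, FreeMonoid.ofList_append]
    rfl

lemma skLin_single (w : FreeMonoid STree) (c : ℚ) :
    skLin (MonoidAlgebra.single w c) = MonoidAlgebra.single (skM w) c :=
  MonoidAlgebra.mapDomainLinearMap_single _ _ _

lemma skLin_onePT (t : STree) :
    skLin (onePT t) = MonoidAlgebra.single (FreeMonoid.ofList (skT t)) 1 :=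
  skLin_single _ _

lemma deltaCKf_append (u v : List DTree) : deltaCKf (u ++ v) = deltaCKf u * deltaCKf v := by
  induction u with
  | nil => rw [List.nil_append, deltaCKf, one_mul]
  | cons t ts ih => rw [List.cons_append, deltaCKf, deltaCKf, ih, mul_assoc]

lemma skT_mkNode {L : List STree} {d : ℕ+} (hL : L.length = d + 1) :
    skT (mkNode L) = [DTree.node d (skL L)] := by
  match L, d, hL with
  | [a], ⟨d, hd⟩, hL => simp at hL; omega
  | a :: b :: rest, ⟨d, hd⟩, hL =>
    simp only [List.length_cons, PNat.mk_coe] at hL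
    obtain rfl : d = 1 + rest.length := by omega
    simp [mkNode, skT, skL, List.append_assoc]

lemma skLin_graft_single {w : FreeMonoid STree} {d : ℕ+} (hw : w.length = d + 1) (c : ℚ) :
    skLin (graft (MonoidAlgebra.single w c)) = Bplus d (skLin (MonoidAlgebra.single w c)) := by
  simp only [graft, Bplus, skLin_single, MonoidAlgebra.mapDomainLinearMap_single,
    skM_eq_ofList_skL, FreeMonoid.toList_ofList, skL, List.append_nil, skT_mkNode hw]

section LeftGrade

variable {R α B : Type*} [CommSemiring R] [Semiring B] [Algebra R B]

def leftGrade (n : ℕ) : Submodule R (MonoidAlgebra R (FreeMonoid α) ⊗[R] B) :=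
  Submodule.span R
    {z | ∃ (w : FreeMonoid α) (y : B), w.length = n ∧ MonoidAlgebra.single w 1 ⊗ₜ y = z}

lemma one_mem_leftGrade_zero :
    (1 : MonoidAlgebra R (FreeMonoid α) ⊗[R] B) ∈ leftGrade 0 :=
  Submodule.subset_span ⟨1, 1, rfl, rfl⟩

lemma mul_mem_leftGrade {m n : ℕ} {x y : MonoidAlgebra R (FreeMonoid α) ⊗[R] B}
    (hx : x ∈ leftGrade m) (hy : y ∈ leftGrade n) : x * y ∈ leftGrade (m + n) := by
  have hxy := Submodule.mul_mem_mul hx hy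
  rw [leftGrade, leftGrade, Submodule.span_mul_span] at hxy
  refine Submodule.span_mono ?_ hxy
  rintro _ ⟨_, ⟨w, a, hw, rfl⟩, _, ⟨w', b, hw', rfl⟩, rfl⟩
  refine ⟨w * w', a * b, by rw [FreeMonoid.length_mul, hw, hw'], ?_⟩
  simp only [Algebra.TensorProduct.tmul_mul_tmul, MonoidAlgebra.single_mul_single, one_mul]

end LeftGrade

lemma map_graft_mem_leftGrade_one (z : HPT ⊗[ℚ] HPT) :
    map graft LinearMap.id z ∈ leftGrade 1 := by
  induction z with
  | zero => rw [map_zero]; exact Submodule.zero_mem _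
  | add x y hx hy => rw [map_add]; exact Submodule.add_mem _ hx hy
  | tmul a y =>
    rw [map_tmul, LinearMap.id_apply]
    induction a using MonoidAlgebra.induction_linear with
    | zero => rw [map_zero, zero_tmul]; exact Submodule.zero_mem _
    | add f g hf hg => rw [map_add, add_tmul]; exact Submodule.add_mem _ hf hg
    | single w c =>
      rw [graft, MonoidAlgebra.mapDomainLinearMap_single, ← mul_one c,
        ← MonoidAlgebra.smul_single', ← smul_tmul']
      exact Submodule.smul_mem _ _ (Submodule.subset_span ⟨_, y, rfl, rfl⟩)

lemma deltaPTt_mem_leftGrade_one (t : STree) : deltaPTt t ∈ leftGrade 1 := by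
  have hleaf (y : HPT) : onePT .leaf ⊗ₜ y ∈ leftGrade 1 := Submodule.subset_span ⟨_, y, rfl, rfl⟩
  cases t with
  | leaf => exact hleaf _
  | node a b l => exact Submodule.add_mem _ (hleaf _) (map_graft_mem_leftGrade_one _)

lemma deltaPTf_mem_leftGrade (l : List STree) : deltaPTf l ∈ leftGrade l.length := by
  induction l with
  | nil => exact one_mem_leftGrade_zero
  | cons t ts ih =>
    rw [List.length_cons, add_comm]
    exact mul_mem_leftGrade (deltaPTt_mem_leftGrade_one t) ih

lemma map_skLin_map_graft {d : ℕ+} {z : HPT ⊗[ℚ] HPT} (hz : z ∈ leftGrade (d + 1)) :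
    map skLin skLin (map graft LinearMap.id z) =
      map (Bplus d) LinearMap.id (map skLin skLin z) := by
  refine LinearMap.eqOn_span (f := map skLin skLin ∘ₗ map graft LinearMap.id)
    (g := map (Bplus d) LinearMap.id ∘ₗ map skLin skLin) ?_ hz
  rintro _ ⟨w, y, hw, rfl⟩
  simp only [LinearMap.comp_apply, map_tmul, LinearMap.id_apply, skLin_graft_single hw]

mutual

theorem deltaCKf_skT (t : STree) : deltaCKf (skT t) = map skLin skLin (deltaPTt t) := by
  cases t with
  | leaf =>
    rw [skT, deltaCKf, deltaPTt, map_tmul, skLin_onePT, Algebra.TensorProduct.one_def]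
    rfl
  | node a b l =>
    have hchildren : deltaCKf (skT a ++ skT b ++ skL l) =
        map skLin skLin (deltaPTt a * deltaPTt b * deltaPTf l) := by
      rw [deltaCKf_append, deltaCKf_append, deltaCKf_skT a, deltaCKf_skT b, deltaCKf_skL l,
        map_skLin_skLin_mul, map_skLin_skLin_mul]
    have hgrade : deltaPTt a * deltaPTt b * deltaPTf l ∈ leftGrade (1 + l.length + 1) := by
      rw [show 1 + l.length + 1 = 1 + 1 + l.length by omega]
      exact mul_mem_leftGrade (mul_mem_leftGrade (deltaPTt_mem_leftGrade_one a)
        (deltaPTt_mem_leftGrade_one b)) (deltaPTf_mem_leftGrade l)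
    rw [skT, deltaCKf, deltaCKf, mul_one]
    -- `skT` writes its decoration as an anonymous subtype, not syntactically an `ℕ+`
    erw [deltaCKt]
    rw [deltaPTt, map_add, map_tmul, skLin_onePT, skLin_onePT, skT, hchildren,
      map_skLin_map_graft (d := ⟨1 + l.length, by omega⟩) hgrade]
    rfl
termination_by sizeOf t

theorem deltaCKf_skL (l : List STree) : deltaCKf (skL l) = map skLin skLin (deltaPTf l) := by
  cases l with
  | nil => rw [skL, deltaCKf, deltaPTf, map_skLin_skLin_one]
  | cons t ts =>
    rw [skL, deltaCKf_append, deltaPTf, map_skLin_skLin_mul, deltaCKf_skT t, deltaCKf_skL ts]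
termination_by sizeOf l

end

/-- **The skeleton map is a morphism of Hopf algebras.** It is an algebra morphism from
`H_PT` to `H_CK`, and it intertwines the coproducts: `Δ_CK ∘ sk = (sk ⊗ sk) ∘ Δ_PT`. -/
theorem skeleton_hopf_morphism :
    (∀ x y : HPT, skLin (x * y) = skLin x * skLin y) ∧
    (∀ t : STree,
      deltaCKf (skT t) = (TensorProduct.map skLin skLin) (deltaPTt t)) :=
  ⟨map_mul skAlg, deltaCKf_skT⟩
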